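/- Let k be a field, n ≥ 1, and let P be the 'nested vertical diamonds' poset with underlying set {s, u_1, …, u_n, t} and order relations s < u_i < t for all i = 1, …, n, the elements u_1, …, u_n being pairwise incomparable. Then the incidence R-ring k^a[P] is Koszul. -/

import Mathlib

noncomputable section
open MulOpposite
open scoped DirectSum

namespace P1605

--CHUNK_G_BEGIN
section GradedRings

variable (R : Type) [Ring R]

/-- A connected graded `R`-ring: a ring `A` together with an `ℕ`-grading by additive
subgroups whose degree-zero part is a copy of `R` (via `emb`), with the multiplicative
grading property.  The (unique) augmentation `A → R` is part of the data. -/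
structure GRing (A : Type) [Ring A] where
  emb : R →+* A
  aug : A →+* R
  deg : ℕ → AddSubgroup A
  internal : DirectSum.IsInternal deg
  emb_mem : ∀ r : R, emb r ∈ deg 0
  emb_surj : ∀ x ∈ deg 0, ∃ r : R, emb r = x
  emb_inj : Function.Injective emb
  mul_mem : ∀ {p q : ℕ} {x y : A}, x ∈ deg p → y ∈ deg q → x * y ∈ deg (p + q)
  aug_emb : ∀ r : R, aug (emb r) = r
  aug_deg : ∀ (n : ℕ), ∀ x ∈ deg (n + 1), aug x = 0

variable {R}

/-- A connected graded ring is strongly graded when every multiplication map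
`A_p ⊗ A_q → A_{p+q}` is surjective, i.e. each element of `A_{p+q}` is a sum of
products of elements of degrees `p` and `q`. -/
def GRing.StronglyGraded {A : Type} [Ring A] (G : GRing R A) : Prop :=
  ∀ p q : ℕ, ∀ z ∈ G.deg (p + q),
    z ∈ AddSubgroup.closure {w : A | ∃ x ∈ G.deg p, ∃ y ∈ G.deg q, w = x * y}

/-- A grading, compatible with a graded ring `G`, on an `A`-module `M`. -/
structure GMod {A : Type} [Ring A] (G : GRing R A) (M : Type) [AddCommGroup M]
    [Module A M] where
  deg : ℕ → AddSubgroup M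
  internal : DirectSum.IsInternal deg
  smul_mem : ∀ {p d : ℕ} {a : A} {x : M}, a ∈ G.deg p → x ∈ deg d → a • x ∈ deg (p + d)

/-- A resolution of `R` by projective graded left `A`-modules, in which the `n`-th
module is generated by its homogeneous component of degree `n`.  Existence of such a
resolution is the definition of Koszulity. -/
structure KResolution {A : Type} [Ring A] (G : GRing R A) where
  P : ℕ → Type
  [acg : ∀ n, AddCommGroup (P n)]
  [mod : ∀ n, Module A (P n)]
  proj : ∀ n, Module.Projective A (P n)
  g : ∀ n, ℕ → AddSubgroup (P n)
  internal : ∀ n, DirectSum.IsInternal (g n)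
  smul_mem : ∀ (n : ℕ) {p d : ℕ} {a : A} {x : P n},
    a ∈ G.deg p → x ∈ g n d → a • x ∈ g n (p + d)
  f : ∀ n, P (n + 1) →+ P n
  f_linear : ∀ (n : ℕ) (a : A) (x : P (n + 1)), f n (a • x) = a • f n x
  f_graded : ∀ (n d : ℕ), ∀ x ∈ g (n + 1) d, f n x ∈ g n d
  eps : P 0 →+ R
  eps_linear : ∀ (a : A) (x : P 0), eps (a • x) = G.aug a * eps x
  eps_surj : Function.Surjective eps
  eps_graded : ∀ (d : ℕ), ∀ x ∈ g 0 (d + 1), eps x = 0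
  comp0 : ∀ x : P 1, eps (f 0 x) = 0
  exact0 : ∀ x : P 0, eps x = 0 → x ∈ Set.range (f 0)
  comp : ∀ (n : ℕ) (x : P (n + 2)), f n (f (n + 1) x) = 0
  exact : ∀ (n : ℕ) (x : P (n + 1)), f n x = 0 → x ∈ Set.range (f (n + 1))
  gen : ∀ (n : ℕ) (x : P n),
    x ∈ AddSubgroup.closure {z : P n | ∃ (a : A), ∃ y ∈ g n n, z = a • y}

/-- A connected graded `R`-ring is Koszul if `R` admits a resolution by projective
graded left `A`-modules such that the `n`-th module is generated in degree `n`. -/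
def GRing.IsKoszul {A : Type} [Ring A] (G : GRing R A) : Prop :=
  Nonempty (KResolution G)

end GradedRings
--CHUNK_G_END

--CHUNK_P_BEGIN
section Posets

variable (k : Type) [Field k] (P : Type) [PartialOrder P]

/-- `ρ` is a length function for the graded poset `P`: every interval `[x, y]`
contains a maximal chain (a saturated chain for the covering relation `⋖`), and
every maximal chain from `x` to `y` has the same length `ρ x y`. -/
structure LengthFn {P : Type} [PartialOrder P] (ρ : P → P → ℕ) : Prop where
  exists_chain : ∀ x y : P, x ≤ y → ∃ c : List P,
    c.Chain' (· ⋖ ·) ∧ c.head? = some x ∧ c.getLast? = some y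
  chain_length : ∀ (x y : P) (c : List P),
    c.Chain' (· ⋖ ·) → c.head? = some x → c.getLast? = some y →
    c.length = ρ x y + 1

/-- `A`, together with the family `e`, is (a copy of) the incidence algebra of the
finite poset `P` over the field `k`: the elements `e x y`, for `x ≤ y`, form a
`k`-basis of `A` and multiply by `e x y * e z w = δ_{y z} · e x w`; the identity
is `∑ₓ e x x`. -/
structure IncAlg [Fintype P] [DecidableEq P] (A : Type) [Ring A] [Algebra k A] where
  e : P → P → A
  e_not_le : ∀ x y : P, ¬ x ≤ y → e x y = 0
  e_mul : ∀ x y z w : P, x ≤ y → z ≤ w →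
    e x y * e z w = if y = z then e x w else 0
  indep : LinearIndependent k (fun p : {p : P × P // p.1 ≤ p.2} => e p.1.1 p.1.2)
  span_top : Submodule.span k
    (Set.range (fun p : {p : P × P // p.1 ≤ p.2} => e p.1.1 p.1.2)) = ⊤
  one_def : (1 : A) = ∑ x : P, e x x

variable {k P}

/-- The canonical structure of connected graded `R`-ring (`R = k^P`) on the
incidence algebra of a finite graded poset: `e x y` is homogeneous of degree
`l([x,y]) = ρ x y`, the degree-zero part is `R` embedded diagonally, and the
augmentation kills all `e x y` with `x ≠ y`. -/
structure IncGrading [Fintype P] [DecidableEq P] {A : Type} [Ring A] [Algebra k A]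
    (inc : IncAlg k P A) (ρ : P → P → ℕ) (G : GRing (P → k) A) : Prop where
  emb_eq : ∀ f : P → k, G.emb f = ∑ x : P, f x • inc.e x x
  deg_eq : ∀ d : ℕ, (G.deg d : Set A) =
    ↑(Submodule.span k {a : A | ∃ x y : P, x ≤ y ∧ ρ x y = d ∧ a = inc.e x y})
  aug_eq : ∀ x y : P, x ≤ y →
    G.aug (inc.e x y) = if x = y then Pi.single x (1 : k) else 0

end Posets
--CHUNK_P_END


/-- The "nested vertical diamonds" poset on `{s, u_1, …, u_n, t}` with
`s < u_i < t` for all `i`, the `u_i` being pairwise incomparable. -/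
inductive VD (n : ℕ) : Type
  | s | u (i : Fin n) | t
deriving DecidableEq, Fintype

namespace VD

variable {n : ℕ}

/-- The order relation of the nested vertical diamonds poset. -/
def le : VD n → VD n → Prop
  | .s, _ => True
  | .u i, .u j => i = j
  | .u _, .t => True
  | .t, .t => True
  | _, _ => False

instance : PartialOrder (VD n) where
  le := le
  le_refl a := by cases a <;> simp [le]
  le_trans a b c hab hbc := by
    cases a <;> cases b <;> cases c <;> simp_all [le]
  le_antisymm a b hab hba := by
    cases a <;> cases b <;> simp_all [le]

end VD

/-!
The augmentation ideal of `A = k^a[P]` is spanned by `e_{s uᵢ}`, `e_{uᵢ t}` (degree 1) and `e_{s t}`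
(degree 2). It is therefore the image of `f₀ : ⊕ᵢ A e_{ss} ⊕ ⊕ᵢ A e_{uᵢuᵢ} → A`, which sends the
generators, placed in degree 1, to `e_{s uᵢ}` and `e_{uᵢ t}`. As `A e_{ss} = k e_{ss}` and
`A e_{uᵢuᵢ} = k e_{uᵢuᵢ} ⊕ k e_{s uᵢ}`, comparing coefficients shows that `ker f₀` is
`{∑ᵢ dᵢ e_{s uᵢ} | ∑ᵢ dᵢ = 0}`, which lies in degree 2 and is the isomorphic image of
`(A e_{ss})ⁿ⁻¹` under `gⱼ ↦ e_{s u_{j+1}} - e_{s u₀}`. Hence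
`0 → (A e_{ss})ⁿ⁻¹ → ⊕ᵢ A e_{ss} ⊕ ⊕ᵢ A e_{uᵢuᵢ} → A → R → 0` is a projective resolution of `R`
whose `i`-th term is generated in degree `i`. Each `⊕ⱼ A e_{xⱼxⱼ}` is graded through its `k`-basis,
placing `e_{y xⱼ}` in degree `l([y, xⱼ])` plus the degree of the generators; this grading is
compatible with the action of `A` because `l` is additive along chains.
-/

section GradedRings

variable {R A : Type} [Ring R] [Ring A]

lemma GRing.one_mem_deg_zero (G : GRing R A) : (1 : A) ∈ G.deg 0 := by
  simpa using G.emb_mem 1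

def GRing.selfGMod (G : GRing R A) : GMod G A where
  deg := G.deg
  internal := G.internal
  smul_mem := G.mul_mem

theorem GRing.isKoszul_of_length_two (G : GRing R A)
    {M₁ M₂ : Type} [AddCommGroup M₁] [Module A M₁] [AddCommGroup M₂] [Module A M₂]
    [Module.Projective A M₁] [Module.Projective A M₂] (W₁ : GMod G M₁) (W₂ : GMod G M₂)
    (f₀ : M₁ →ₗ[A] A) (f₁ : M₂ →ₗ[A] M₁)
    (hf₀ : ∀ d, ∀ x ∈ W₁.deg d, f₀ x ∈ G.deg d) (hf₁ : ∀ d, ∀ x ∈ W₂.deg d, f₁ x ∈ W₁.deg d)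
    (exact₀ : Function.Exact f₀ G.aug) (exact₁ : Function.Exact f₁ f₀)
    (hinj : Function.Injective f₁)
    (gen₁ : ∀ x : M₁, x ∈ AddSubgroup.closure {z | ∃ a : A, ∃ y ∈ W₁.deg 1, z = a • y})
    (gen₂ : ∀ x : M₂, x ∈ AddSubgroup.closure {z | ∃ a : A, ∃ y ∈ W₂.deg 2, z = a • y}) :
    G.IsKoszul := by
  refine ⟨
  { P := fun | 0 => A | 1 => M₁ | 2 => M₂ | _ + 3 => PUnit
    acg := fun
      | 0 => inferInstanceAs (AddCommGroup A)
      | 1 => inferInstanceAs (AddCommGroup M₁)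
      | 2 => inferInstanceAs (AddCommGroup M₂)
      | _ + 3 => inferInstanceAs (AddCommGroup PUnit)
    mod := fun
      | 0 => inferInstanceAs (Module A A)
      | 1 => inferInstanceAs (Module A M₁)
      | 2 => inferInstanceAs (Module A M₂)
      | _ + 3 => inferInstanceAs (Module A PUnit)
    proj := fun
      | 0 => inferInstanceAs (Module.Projective A A)
      | 1 => inferInstanceAs (Module.Projective A M₁)
      | 2 => inferInstanceAs (Module.Projective A M₂)
      | _ + 3 => inferInstanceAs (Module.Projective A PUnit)
    g := fun
      | 0 => G.deg
      | 1 => W₁.deg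
      | 2 => W₂.deg
      | _ + 3 => fun _ => ⊥
    internal := fun
      | 0 => G.internal
      | 1 => W₁.internal
      | 2 => W₂.internal
      | _ + 3 => ⟨fun _ _ _ => Subsingleton.elim _ _, fun _ => ⟨0, Subsingleton.elim _ _⟩⟩
    smul_mem := fun
      | 0 => G.mul_mem
      | 1 => W₁.smul_mem
      | 2 => W₂.smul_mem
      | _ + 3 => fun _ _ => AddSubgroup.mem_bot.mpr (Subsingleton.elim _ _)
    f := fun
      | 0 => f₀.toAddMonoidHom
      | 1 => f₁.toAddMonoidHom
      | _ + 2 => 0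
    f_linear := fun
      | 0 => f₀.map_smul
      | 1 => f₁.map_smul
      | 2 => fun a _ => (smul_zero a).symm
      | _ + 3 => fun _ _ => rfl
    f_graded := fun
      | 0 => hf₀
      | 1 => hf₁
      | 2 => fun _ _ _ => AddSubgroup.zero_mem _
      | _ + 3 => fun _ _ _ => AddSubgroup.zero_mem _
    eps := G.aug.toAddMonoidHom
    eps_linear := map_mul G.aug
    eps_surj := fun r => ⟨G.emb r, G.aug_emb r⟩
    eps_graded := G.aug_deg
    comp0 := fun x => exact₀.apply_apply_eq_zero x
    exact0 := fun x => (exact₀ x).mp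
    comp := fun
      | 0 => exact₁.apply_apply_eq_zero
      | 1 => fun _ => map_zero f₁
      | _ + 2 => fun _ => rfl
    exact := fun
      | 0 => fun x => (exact₁ x).mp
      | 1 => fun x hx => ⟨PUnit.unit, (hinj (hx.trans f₁.map_zero.symm)).symm⟩
      | _ + 2 => fun _ _ => ⟨PUnit.unit, Subsingleton.elim _ _⟩
    gen := fun
      | 0 => fun a => AddSubgroup.subset_closure ⟨a, 1, G.one_mem_deg_zero, (mul_one a).symm⟩
      | 1 => gen₁
      | 2 => gen₂
      | _ + 3 => fun x => (Subsingleton.elim (α := PUnit) 0 x) ▸ zero_mem _ }⟩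

end GradedRings

section LeftIdeals

variable {A : Type} [Ring A]

lemma mem_span_singleton_iff_mul_eq {e a : A} (he : IsIdempotentElem e) :
    a ∈ Submodule.span A {e} ↔ a * e = a := by
  refine Submodule.mem_span_singleton.trans ⟨?_, fun h => ⟨a, h⟩⟩
  rintro ⟨b, rfl⟩
  rw [smul_eq_mul, mul_assoc, he.eq]

theorem projective_pi_span_idempotent {J : Type} [Fintype J] {e : J → A}
    (he : ∀ j, IsIdempotentElem (e j)) :
    Module.Projective A (Π j, Submodule.span A {e j}) :=
  Module.Projective.of_split (LinearMap.pi fun j => (Submodule.span A {e j}).subtype ∘ₗ .proj j)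
    (LinearMap.pi fun j => ((LinearMap.toSpanSingleton A A (e j)).codRestrict _ fun a =>
      Submodule.mem_span_singleton.mpr ⟨a, rfl⟩) ∘ₗ .proj j)
    (LinearMap.ext fun v => funext fun j =>
      Subtype.ext ((mem_span_singleton_iff_mul_eq (he j)).mp (v j).2))

def piSpanLift {J : Type} [Fintype J] {e : J → A} {M : Type} [AddCommGroup M] [Module A M]
    (m : J → M) : (Π j, Submodule.span A {e j}) →ₗ[A] M :=
  ∑ j, LinearMap.toSpanSingleton A M (m j) ∘ₗ (Submodule.span A {e j}).subtype ∘ₗ .proj j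

lemma piSpanLift_apply {J : Type} [Fintype J] {e : J → A} {M : Type} [AddCommGroup M]
    [Module A M] (m : J → M) (v : Π j, Submodule.span A {e j}) :
    piSpanLift m v = ∑ j, (v j : A) • m j := by
  simp [piSpanLift]

end LeftIdeals

theorem Module.Basis.isInternal_span_fibers {R M ι : Type} [Ring R] [AddCommGroup M]
    [Module R M] (b : Module.Basis ι R M) (dg : ι → ℕ) :
    DirectSum.IsInternal fun d => Submodule.span R (b '' {i | dg i = d}) := by
  rw [DirectSum.isInternal_submodule_iff_iSupIndep_and_iSup_eq_top]
  constructor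
  · intro d
    have hsup : (⨆ d' ≠ d, Submodule.span R (b '' {i | dg i = d'})) =
        Submodule.span R (b '' ⋃ d' ≠ d, {i | dg i = d'}) := by
      simp_rw [Set.image_iUnion, Submodule.span_iUnion]
    rw [hsup]
    refine b.linearIndependent.disjoint_span_image (Set.disjoint_left.mpr ?_)
    rintro i (rfl : dg i = _)
    simp
  · rw [← Submodule.span_iUnion, eq_top_iff, ← b.span_eq, Submodule.span_le]
    rintro _ ⟨i, rfl⟩
    exact Submodule.subset_span (Set.mem_iUnion.mpr ⟨dg i, Set.mem_image_of_mem b rfl⟩)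

namespace LengthFn

variable {P : Type} [PartialOrder P] {ρ : P → P → ℕ}

lemma self_eq_zero (hρ : LengthFn ρ) (x : P) : ρ x x = 0 := by
  simpa using (hρ.chain_length x x [x] (List.isChain_singleton x) rfl rfl).symm

lemma eq_one_of_covBy (hρ : LengthFn ρ) {x y : P} (h : x ⋖ y) : ρ x y = 1 := by
  simpa using (hρ.chain_length x y [x, y] (List.isChain_pair.mpr h) rfl rfl).symm

lemma add_eq (hρ : LengthFn ρ) {x y z : P} (hxy : x ≤ y) (hyz : y ≤ z) :
    ρ x y + ρ y z = ρ x z := by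
  obtain ⟨c₁, hc₁, hx, hy⟩ := hρ.exists_chain x y hxy
  obtain ⟨_ | ⟨y', c₂⟩, hc₂, hy', hz⟩ := hρ.exists_chain y z hyz
  · simp at hy'
  obtain rfl : y = y' := by simpa using hy'.symm
  have hchain : (c₁ ++ c₂).IsChain (· ⋖ ·) := by
    refine hc₁.append hc₂.tail fun a ha b hb => ?_
    rw [hy, Option.mem_some_iff] at ha
    subst ha
    exact hc₂.rel_head? hb
  have hlen := hρ.chain_length x z (c₁ ++ c₂) hchain
    (by rw [List.head?_append, hx]; rfl)
    (by rw [List.getLast?_append, hy]; cases c₂ <;> simp_all)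
  have h₁ := hρ.chain_length x y c₁ hc₁ hx hy
  have h₂ := hρ.chain_length y z (y :: c₂) hc₂ hy' hz
  simp only [List.length_append, List.length_cons] at hlen h₂
  omega

end LengthFn

namespace IncAlg

variable {k P A : Type} [Field k] [PartialOrder P] [Fintype P] [DecidableEq P] [Ring A]
  [Algebra k A] (inc : IncAlg k P A)

def basis : Module.Basis {p : P × P // p.1 ≤ p.2} k A :=
  .mk inc.indep inc.span_top.ge

@[simp] lemma basis_apply (p : {p : P × P // p.1 ≤ p.2}) : inc.basis p = inc.e p.1.1 p.1.2 := by
  simp [basis]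

lemma e_ne_zero {x y : P} (h : x ≤ y) : inc.e x y ≠ 0 := by
  simpa using inc.basis.ne_zero ⟨(x, y), h⟩

lemma isIdempotentElem_e (x : P) : IsIdempotentElem (inc.e x x) := by
  simp [IsIdempotentElem, inc.e_mul x x x x le_rfl le_rfl]

lemma e_mul_e_self {x y : P} (h : x ≤ y) : inc.e x y * inc.e y y = inc.e x y := by
  simp [inc.e_mul x y y y h le_rfl]

lemma e_self_mul_e {x y : P} (h : x ≤ y) : inc.e x x * inc.e x y = inc.e x y := by
  simp [inc.e_mul x x x y le_rfl h]

lemma mem_span_e (a : A) :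
    a ∈ Submodule.span k (Set.range fun p : {p : P × P // p.1 ≤ p.2} => inc.e p.1.1 p.1.2) := by
  rw [inc.span_top]
  trivial

lemma mul_e_self_mem_span (a : A) (x : P) :
    a * inc.e x x ∈ Submodule.span k (Set.range fun y : Set.Iic x => inc.e y x) := by
  induction inc.mem_span_e a using Submodule.span_induction with
  | mem w hw =>
    obtain ⟨⟨⟨y, z⟩, hyz : y ≤ z⟩, rfl⟩ := hw
    rw [inc.e_mul y z x x hyz le_rfl]
    split_ifs with hz
    · subst hz
      exact Submodule.subset_span ⟨⟨y, hyz⟩, rfl⟩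
    · exact zero_mem _
  | zero => simp
  | add w₁ w₂ _ _ h₁ h₂ => rw [add_mul]; exact add_mem h₁ h₂
  | smul c w _ h => rw [smul_mul_assoc]; exact Submodule.smul_mem _ c h

lemma restrictScalars_span_e_self (x : P) :
    (Submodule.span A {inc.e x x}).restrictScalars k =
      Submodule.span k (Set.range fun y : Set.Iic x => inc.e y x) := by
  have hmem {a : A} := mem_span_singleton_iff_mul_eq (a := a) (inc.isIdempotentElem_e x)
  refine le_antisymm (fun a ha => hmem.mp ha ▸ inc.mul_e_self_mem_span a x) ?_
  rw [Submodule.span_le]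
  rintro _ ⟨⟨y, hy⟩, rfl⟩
  exact hmem.mpr (inc.e_mul_e_self hy)

lemma linearIndependent_e_left (x : P) :
    LinearIndependent k fun y : Set.Iic x => inc.e y x :=
  inc.indep.comp (fun y => ⟨(y.1, x), y.2⟩) fun _ _ h => Subtype.ext (congrArg (·.1.1) h)

def colBasis (x : P) : Module.Basis (Set.Iic x) k (Submodule.span A {inc.e x x}) :=
  (Module.Basis.span (inc.linearIndependent_e_left x)).map
    ((LinearEquiv.ofEq _ _ (inc.restrictScalars_span_e_self x).symm).trans
      ((Submodule.restrictScalarsEquiv k A A (Submodule.span A {inc.e x x})).restrictScalars k))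

@[simp] lemma colBasis_apply (x : P) (y : Set.Iic x) : (inc.colBasis x y : A) = inc.e y x := by
  simp only [colBasis, Module.Basis.map_apply, Module.Basis.span_apply, LinearEquiv.trans_apply,
    LinearEquiv.restrictScalars_apply]
  rfl

lemma mem_span_e_self_iff {x : P} {a : A} : a ∈ Submodule.span A {inc.e x x} ↔
    a ∈ Submodule.span k ((fun y => inc.e y x) '' Set.Iic x) := by
  rw [Set.image_eq_range, ← inc.restrictScalars_span_e_self]
  rfl

lemma basis_repr_e {x y z w : P} (hxy : x ≤ y) (hzw : z ≤ w) :
    inc.basis.repr (inc.e z w) ⟨(x, y), hxy⟩ = if z = x ∧ w = y then 1 else 0 := by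
  rw [← inc.basis_apply ⟨(z, w), hzw⟩, Module.Basis.repr_self, Finsupp.single_apply]
  simp

end IncAlg

namespace IncGrading

variable {k P A : Type} [Field k] [PartialOrder P] [Fintype P] [DecidableEq P] [Ring A]
  [Algebra k A] {inc : IncAlg k P A} {ρ : P → P → ℕ} {GA : GRing (P → k) A}

lemma mem_deg_iff (hGA : IncGrading inc ρ GA) {d : ℕ} {a : A} :
    a ∈ GA.deg d ↔ a ∈ Submodule.span k {b | ∃ x y, x ≤ y ∧ ρ x y = d ∧ b = inc.e x y} := by
  rw [← SetLike.mem_coe, hGA.deg_eq d, SetLike.mem_coe]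

lemma e_mem_deg (hGA : IncGrading inc ρ GA) {x y : P} (h : x ≤ y) :
    inc.e x y ∈ GA.deg (ρ x y) :=
  hGA.mem_deg_iff.mpr (Submodule.subset_span ⟨x, y, h, rfl, rfl⟩)

lemma algebraMap_eq_emb (hGA : IncGrading inc ρ GA) (c : k) :
    algebraMap k A c = GA.emb fun _ => c := by
  rw [hGA.emb_eq, Algebra.algebraMap_eq_smul_one, inc.one_def, Finset.smul_sum]

lemma smul_mem_of_mem {M : Type} [AddCommGroup M] [Module A M] [Module k M]
    [IsScalarTower k A M] (hGA : IncGrading inc ρ GA) (W : GMod GA M) (c : k) {d : ℕ} {w : M}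
    (hw : w ∈ W.deg d) : c • w ∈ W.deg d := by
  rw [← algebraMap_smul A c w, hGA.algebraMap_eq_emb]
  simpa using W.smul_mem (GA.emb_mem _) hw

lemma aug_smul (hGA : IncGrading inc ρ GA) (c : k) (a : A) : GA.aug (c • a) = c • GA.aug a := by
  rw [Algebra.smul_def, map_mul, hGA.algebraMap_eq_emb, GA.aug_emb]
  rfl

lemma emb_aug_e_self (hGA : IncGrading inc ρ GA) (x : P) :
    GA.emb (GA.aug (inc.e x x)) = inc.e x x := by
  rw [hGA.aug_eq x x le_rfl, if_pos rfl, hGA.emb_eq, Finset.sum_eq_single x] <;> simp_all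

lemma mem_span_offDiag_of_aug_eq_zero (hGA : IncGrading inc ρ GA) {a : A}
    (ha : GA.aug a = 0) : a ∈ Submodule.span k {b | ∃ x y, x < y ∧ b = inc.e x y} := by
  suffices h : a - GA.emb (GA.aug a) ∈ Submodule.span k {b | ∃ x y, x < y ∧ b = inc.e x y} by
    simpa [ha] using h
  clear ha
  induction inc.mem_span_e a using Submodule.span_induction with
  | mem w hw =>
    obtain ⟨⟨⟨x, y⟩, hxy : x ≤ y⟩, rfl⟩ := hw
    obtain rfl | hlt := eq_or_lt_of_le hxy
    · simp [hGA.emb_aug_e_self]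
    · rw [hGA.aug_eq x y hxy, if_neg hlt.ne, map_zero, sub_zero]
      exact Submodule.subset_span ⟨x, y, hlt, rfl⟩
  | zero => simp
  | add w₁ w₂ _ _ h₁ h₂ =>
    convert add_mem h₁ h₂ using 1
    simp only [map_add]; abel
  | smul c w _ h =>
    convert Submodule.smul_mem _ c h using 1
    rw [hGA.aug_smul, smul_sub, show c • GA.aug w = (fun _ => c) * GA.aug w from rfl, map_mul,
      ← hGA.algebraMap_eq_emb, ← Algebra.smul_def]

theorem exact_aug {M : Type} [AddCommGroup M] [Module A M] (hGA : IncGrading inc ρ GA)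
    (f : M →ₗ[A] A) (hf : ∀ v, GA.aug (f v) = 0)
    (hrange : ∀ x y, x < y → inc.e x y ∈ LinearMap.range f) : Function.Exact f GA.aug := by
  intro a
  refine ⟨fun ha => ?_, fun ⟨v, hv⟩ => hv ▸ hf v⟩
  have hle : Submodule.span k {b | ∃ x y, x < y ∧ b = inc.e x y} ≤
      (LinearMap.range f).restrictScalars k := by
    rw [Submodule.span_le]
    rintro _ ⟨x, y, hxy, rfl⟩
    exact hrange x y hxy
  exact hle (hGA.mem_span_offDiag_of_aug_eq_zero ha)

end IncGrading

namespace IncAlg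

variable {k P A : Type} [Field k] [PartialOrder P] [Fintype P] [DecidableEq P] [Ring A]
  [Algebra k A] (inc : IncAlg k P A) {J : Type} [Fintype J]

abbrev ProjSum (x : J → P) : Type := Π j, Submodule.span A {inc.e (x j) (x j)}

theorem projective_projSum (x : J → P) : Module.Projective A (inc.ProjSum x) :=
  projective_pi_span_idempotent fun j => inc.isIdempotentElem_e (x j)

def projBasis (x : J → P) : Module.Basis (Σ j, Set.Iic (x j)) k (inc.ProjSum x) :=
  Pi.basis fun j => inc.colBasis (x j)

variable (ρ : P → P → ℕ)

def projDeg (x : J → P) (s d : ℕ) : Submodule k (inc.ProjSum x) :=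
  Submodule.span k (inc.projBasis x '' {q | ρ q.2 (x q.1) + s = d})

lemma isInternal_projDeg (x : J → P) (s : ℕ) :
    DirectSum.IsInternal fun d => (inc.projDeg ρ x s d).toAddSubgroup :=
  Module.Basis.isInternal_span_fibers (inc.projBasis x) _

variable [DecidableEq J]

lemma projBasis_apply (x : J → P) (q : Σ j, Set.Iic (x j)) :
    inc.projBasis x q = Pi.single q.1 (inc.colBasis (x q.1) q.2) :=
  Pi.basis_apply _ q

lemma e_smul_projBasis {x : J → P} {z w : P} (hzw : z ≤ w) (q : Σ j, Set.Iic (x j)) :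
    inc.e z w • inc.projBasis x q =
      if h : w = q.2 then inc.projBasis x ⟨q.1, z, hzw.trans (h ▸ q.2.2)⟩ else 0 := by
  rw [projBasis_apply, ← Pi.single_smul]
  split_ifs with h
  · rw [projBasis_apply]
    congr 1
    exact Subtype.ext (by
      rw [Submodule.coe_smul, colBasis_apply, colBasis_apply, smul_eq_mul,
        inc.e_mul _ _ _ _ hzw q.2.2, if_pos h])
  · rw [← Pi.single_zero q.1]
    congr 1
    exact Subtype.ext (by simp [inc.e_mul z w q.2 (x q.1) hzw q.2.2, h])

lemma smul_projBasis_self (x : J → P) (v : inc.ProjSum x) (j : J) :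
    (v j : A) • inc.projBasis x ⟨j, x j, le_rfl⟩ = Pi.single j (v j) := by
  rw [projBasis_apply, ← Pi.single_smul]
  congr 1
  exact Subtype.ext (by
    rw [Submodule.coe_smul, colBasis_apply, smul_eq_mul]
    exact (mem_span_singleton_iff_mul_eq (inc.isIdempotentElem_e _)).mp (v j).2)

lemma piSpanLift_projBasis {M : Type} [AddCommGroup M] [Module A M] {x : J → P} (m : J → M)
    (q : Σ j, Set.Iic (x j)) : piSpanLift m (inc.projBasis x q) = inc.e q.2 (x q.1) • m q.1 := by
  rw [piSpanLift_apply, Finset.sum_eq_single q.1 (fun i _ hi => by simp [projBasis_apply, hi])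
    (by simp), projBasis_apply, Pi.single_eq_same, colBasis_apply]

variable {inc ρ} {GA : GRing (P → k) A}

lemma smul_mem_projDeg (hGA : IncGrading inc ρ GA) (hρ : LengthFn ρ) {x : J → P}
    {s p d : ℕ} {a : A} {v : inc.ProjSum x} (ha : a ∈ GA.deg p) (hv : v ∈ inc.projDeg ρ x s d) :
    a • v ∈ inc.projDeg ρ x s (p + d) := by
  induction hv using Submodule.span_induction with
  | mem v hv =>
    obtain ⟨⟨j, y, hy⟩, hq : ρ y (x j) + s = d, rfl⟩ := hv
    replace ha := hGA.mem_deg_iff.mp ha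
    induction ha using Submodule.span_induction with
    | mem a ha =>
      obtain ⟨z, w, hzw, rfl, rfl⟩ := ha
      rw [inc.e_smul_projBasis hzw]
      split_ifs with h
      · obtain rfl : w = y := h
        refine Submodule.subset_span ⟨_, ?_, rfl⟩
        show ρ z (x j) + s = ρ z w + d
        rw [← hρ.add_eq hzw hy]
        omega
      · exact zero_mem _
    | zero => simp
    | add a₁ a₂ _ _ h₁ h₂ => rw [add_smul]; exact add_mem h₁ h₂
    | smul c a _ h => rw [smul_assoc]; exact Submodule.smul_mem _ c h
  | zero => simp
  | add v₁ v₂ _ _ h₁ h₂ => rw [smul_add]; exact add_mem h₁ h₂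
  | smul c v _ h => rw [smul_comm]; exact Submodule.smul_mem _ c h

lemma piSpanLift_mem_projDeg (hGA : IncGrading inc ρ GA) {M : Type} [AddCommGroup M]
    [Module A M] [Module k M] [IsScalarTower k A M] (W : GMod GA M) {x : J → P} {s d : ℕ}
    {m : J → M} (hm : ∀ j, m j ∈ W.deg s) {v : inc.ProjSum x}
    (hv : v ∈ inc.projDeg ρ x s d) : piSpanLift m v ∈ W.deg d := by
  induction hv using Submodule.span_induction with
  | mem v hv =>
    obtain ⟨⟨j, y, hy⟩, hq : ρ y (x j) + s = d, rfl⟩ := hv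
    rw [piSpanLift_projBasis, ← hq]
    exact W.smul_mem (hGA.e_mem_deg hy) (hm j)
  | zero => simp
  | add v₁ v₂ _ _ h₁ h₂ => rw [map_add]; exact add_mem h₁ h₂
  | smul c v _ h => rw [LinearMap.map_smul_of_tower]; exact hGA.smul_mem_of_mem W c h

lemma mem_closure_smul_projDeg (hρ : LengthFn ρ) (x : J → P) (s : ℕ) (v : inc.ProjSum x) :
    v ∈ AddSubgroup.closure
      {z | ∃ a : A, ∃ y ∈ (inc.projDeg ρ x s s).toAddSubgroup, z = a • y} := by
  rw [← Finset.univ_sum_single v]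
  refine sum_mem fun j _ =>
    AddSubgroup.subset_closure ⟨v j, _, ?_, (inc.smul_projBasis_self x v j).symm⟩
  refine Submodule.subset_span ⟨_, ?_, rfl⟩
  simp [hρ.self_eq_zero]

def projGMod (hGA : IncGrading inc ρ GA) (hρ : LengthFn ρ) (x : J → P) (s : ℕ) :
    GMod GA (inc.ProjSum x) where
  deg d := (inc.projDeg ρ x s d).toAddSubgroup
  internal := inc.isInternal_projDeg ρ x s
  smul_mem := smul_mem_projDeg hGA hρ

end IncAlg

namespace VD

section

variable {n : ℕ}

@[simp] lemma s_le (x : VD n) : s ≤ x := trivial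
@[simp] lemma le_t (x : VD n) : x ≤ t := by cases x <;> trivial
@[simp] lemma u_le_u {i j : Fin n} : (u i : VD n) ≤ u j ↔ i = j := Iff.rfl
@[simp] lemma not_u_le_s (i : Fin n) : ¬ (u i : VD n) ≤ s := id
@[simp] lemma not_t_le_s : ¬ (t : VD n) ≤ s := id
@[simp] lemma not_t_le_u (i : Fin n) : ¬ (t : VD n) ≤ u i := id

lemma Iic_s : Set.Iic (s : VD n) = {s} := by
  ext x; cases x <;> simp

lemma Iic_u (i : Fin n) : Set.Iic (u i : VD n) = {s, u i} := by
  ext x; cases x <;> simp [eq_comm]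

lemma s_covBy_u (i : Fin n) : (s : VD n) ⋖ u i :=
  ⟨lt_of_le_not_ge (s_le _) (not_u_le_s i), fun c hsc hcu => by
    cases c <;> simp_all [lt_iff_le_not_ge, eq_comm]⟩

lemma u_covBy_t (i : Fin n) : (u i : VD n) ⋖ t :=
  ⟨lt_of_le_not_ge (le_t _) (not_t_le_u i), fun c hsc hcu => by
    cases c <;> simp_all [lt_iff_le_not_ge, eq_comm]⟩

variable {ρ : VD n → VD n → ℕ}

lemma rho_s_u (hρ : LengthFn ρ) (i : Fin n) : ρ s (u i) = 1 := hρ.eq_one_of_covBy (s_covBy_u i)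

lemma rho_u_t (hρ : LengthFn ρ) (i : Fin n) : ρ (u i) t = 1 := hρ.eq_one_of_covBy (u_covBy_t i)

lemma rho_s_t (hρ : LengthFn ρ) (i : Fin n) : ρ s t = 2 := by
  rw [← hρ.add_eq (s_le (u i)) (le_t _), rho_s_u hρ, rho_u_t hρ]

variable {k A : Type} [Field k] [Ring A] [Algebra k A] (inc : IncAlg k (VD n) A)

lemma exists_eq_smul_e_s_s (a : Submodule.span A {inc.e s s}) :
    ∃ c : k, (a : A) = c • inc.e s s := by
  have ha := inc.mem_span_e_self_iff.mp a.2
  rw [Iic_s, Set.image_singleton, Submodule.mem_span_singleton] at ha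
  obtain ⟨c, hc⟩ := ha
  exact ⟨c, hc.symm⟩

lemma exists_eq_smul_e_u_u_add_smul_e_s_u (i : Fin n) (a : Submodule.span A {inc.e (u i) (u i)}) :
    ∃ c d : k, (a : A) = c • inc.e (u i) (u i) + d • inc.e s (u i) := by
  have ha := inc.mem_span_e_self_iff.mp a.2
  rw [Iic_u, Set.image_pair, Submodule.mem_span_pair] at ha
  obtain ⟨d, c, hcd⟩ := ha
  exact ⟨c, d, by rw [← hcd, add_comm]⟩

end

section Resolution

variable {k A : Type} [Field k] [Ring A] [Algebra k A] {m : ℕ} (inc : IncAlg k (VD (m + 1)) A)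

def x₁ : Fin (m + 1) ⊕ Fin (m + 1) → VD (m + 1) := Sum.elim (fun _ => s) u

def x₂ : Fin m → VD (m + 1) := fun _ => s

def f₀ : inc.ProjSum x₁ →ₗ[A] A :=
  piSpanLift (Sum.elim (fun i => inc.e s (u i)) (fun i => inc.e (u i) t))

def σ (i : Fin (m + 1)) : inc.ProjSum x₁ := inc.projBasis x₁ ⟨.inr i, s, s_le (x₁ (.inr i))⟩

def f₁ : inc.ProjSum x₂ →ₗ[A] inc.ProjSum x₁ := piSpanLift fun j => σ inc j.succ - σ inc 0

lemma f₀_apply (v : inc.ProjSum x₁) :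
    f₀ inc v = ∑ i, (v (.inl i) : A) * inc.e s (u i) + ∑ i, (v (.inr i) : A) * inc.e (u i) t := by
  rw [f₀, piSpanLift_apply, Fintype.sum_sum_type]
  rfl

lemma f₀_projBasis (q : Σ j, Set.Iic (x₁ (m := m) j)) :
    f₀ inc (inc.projBasis x₁ q) =
      inc.e q.2 (x₁ q.1) * Sum.elim (fun i => inc.e s (u i)) (fun i => inc.e (u i) t) q.1 :=
  inc.piSpanLift_projBasis _ q

lemma f₀_σ (i : Fin (m + 1)) : f₀ inc (σ inc i) = inc.e s t :=
  (f₀_projBasis inc _).trans ((inc.e_mul _ _ _ _ (s_le (u i)) (le_t _)).trans (if_pos rfl))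

lemma e_mem_range_f₀ {x y : VD (m + 1)} (hxy : x < y) : inc.e x y ∈ LinearMap.range (f₀ inc) := by
  rcases x with _ | i | _ <;> rcases y with _ | j | _ <;>
    simp [lt_iff_le_not_ge, eq_comm] at hxy
  · exact ⟨_, (f₀_projBasis inc ⟨.inl j, s, s_le (x₁ (.inl j))⟩).trans
      (inc.e_self_mul_e (s_le (u j)))⟩
  · exact ⟨σ inc 0, f₀_σ inc 0⟩
  · exact ⟨_, (f₀_projBasis inc ⟨.inr i, u i, show u i ≤ u i from le_rfl⟩).trans
      (inc.e_self_mul_e (le_t (u i)))⟩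

lemma eq_sum_smul_σ_of_f₀_eq_zero {v : inc.ProjSum x₁} (hv : f₀ inc v = 0) :
    ∃ d : Fin (m + 1) → k, ∑ i, d i = 0 ∧ v = ∑ i, d i • σ inc i := by
  choose c hc using fun i => exists_eq_smul_e_s_s inc (v (.inl i))
  choose c' d hcd using fun i => exists_eq_smul_e_u_u_add_smul_e_s_u inc i (v (.inr i))
  have hv' : ∑ i, c i • inc.e s (u i) + ∑ i, c' i • inc.e (u i) t + (∑ i, d i) • inc.e s t = 0 := by
    rw [← hv, f₀_apply]
    simp [hc, hcd, add_mul, inc.e_mul, Finset.sum_add_distrib, Finset.sum_smul, add_assoc]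
  have hc₀ : ∀ i, c i = 0 := fun i => by
    simpa [inc.basis_repr_e] using congrArg (inc.basis.coord ⟨(s, u i), s_le _⟩) hv'
  have hc'₀ : ∀ i, c' i = 0 := fun i => by
    simpa [inc.basis_repr_e] using congrArg (inc.basis.coord ⟨(u i, t), le_t _⟩) hv'
  have hd₀ : ∑ i, d i = 0 := by
    simpa [inc.basis_repr_e] using congrArg (inc.basis.coord ⟨(s, t), le_t _⟩) hv'
  refine ⟨d, hd₀, funext fun j => Subtype.ext ?_⟩
  rw [Finset.sum_apply]
  rcases j with l | l
  · simp [σ, inc.projBasis_apply, hc, hc₀]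
  · rw [Finset.sum_eq_single l (fun i _ hi => by simp [σ, inc.projBasis_apply, hi]) (by simp)]
    simp only [hcd, hc'₀, zero_smul, zero_add, σ, inc.projBasis_apply, Pi.smul_apply,
      Pi.single_eq_same, SetLike.val_smul_of_tower, IncAlg.colBasis_apply]
    rfl

lemma e_s_s_smul_σ (i : Fin (m + 1)) : inc.e s s • σ inc i = σ inc i := by
  rw [σ, inc.e_smul_projBasis le_rfl, dif_pos rfl]

lemma σ_apply_of_ne {i : Fin (m + 1)} {j : Fin (m + 1) ⊕ Fin (m + 1)} (h : j ≠ .inr i) :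
    σ inc i j = 0 := by
  rw [σ, inc.projBasis_apply, Pi.single_eq_of_ne h]

lemma σ_apply_self (i : Fin (m + 1)) : (σ inc i (.inr i) : A) = inc.e s (u i) := by
  rw [σ, inc.projBasis_apply, Pi.single_eq_same, IncAlg.colBasis_apply]
  rfl

lemma f₁_apply (w : inc.ProjSum x₂) : f₁ inc w = ∑ j, (w j : A) • (σ inc j.succ - σ inc 0) :=
  piSpanLift_apply _ w

lemma f₁_projBasis (j : Fin m) :
    f₁ inc (inc.projBasis x₂ ⟨j, s, s_le (x₂ j)⟩) = σ inc j.succ - σ inc 0 := by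
  rw [f₁, inc.piSpanLift_projBasis]
  show inc.e s s • (σ inc j.succ - σ inc 0) = _
  rw [smul_sub, e_s_s_smul_σ, e_s_s_smul_σ]

lemma f₁_injective : Function.Injective (f₁ inc) := by
  refine (injective_iff_map_eq_zero _).mpr fun w hw => ?_
  choose c hc using fun j => exists_eq_smul_e_s_s inc (w j)
  have hc₀ : ∀ j, c j = 0 := fun j => by
    have hwj := congrArg (fun v : inc.ProjSum x₁ => (v (.inr j.succ) : A)) hw
    simp only [f₁_apply, hc, smul_assoc, smul_sub, e_s_s_smul_σ] at hwj
    rw [Finset.sum_apply, Finset.sum_eq_single j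
      (fun b _ hb => by simp [σ_apply_of_ne, hb.symm]) (by simp)] at hwj
    simpa [σ_apply_of_ne, σ_apply_self, inc.e_ne_zero] using hwj
  exact funext fun j => Subtype.ext (by simp [hc, hc₀])

lemma exact_f₁_f₀ : Function.Exact (f₁ inc) (f₀ inc) := by
  intro v
  constructor
  · intro hv
    obtain ⟨d, hd, rfl⟩ := eq_sum_smul_σ_of_f₀_eq_zero inc hv
    refine ⟨∑ j, d j.succ • inc.projBasis x₂ ⟨j, s, s_le (x₂ j)⟩, ?_⟩
    have hd₀ : d 0 = -∑ j : Fin m, d j.succ := by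
      rw [Fin.sum_univ_succ] at hd
      exact eq_neg_of_add_eq_zero_left hd
    simp only [map_sum, LinearMap.map_smul_of_tower, f₁_projBasis, smul_sub,
      Finset.sum_sub_distrib, ← Finset.sum_smul, Fin.sum_univ_succ (f := fun i => d i • σ inc i),
      hd₀, neg_smul]
    abel
  · rintro ⟨w, rfl⟩
    simp [f₁_apply, f₀_σ]

variable {inc} {ρ : VD (m + 1) → VD (m + 1) → ℕ} {GA : GRing (VD (m + 1) → k) A}

lemma exact_f₀_aug (hGA : IncGrading inc ρ GA) : Function.Exact (f₀ inc) GA.aug := by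
  have h₁ : ∀ i, GA.aug (inc.e s (u i)) = 0 := fun i => by simp [hGA.aug_eq]
  have h₂ : ∀ i, GA.aug (inc.e (u i) t) = 0 := fun i => by simp [hGA.aug_eq]
  exact hGA.exact_aug _ (fun v => by simp [f₀_apply, h₁, h₂]) fun _ _ => e_mem_range_f₀ inc

lemma f₀_mem_deg (hGA : IncGrading inc ρ GA) (hρ : LengthFn ρ) (d : ℕ)
    (v : inc.ProjSum x₁) (hv : v ∈ (inc.projGMod hGA hρ x₁ 1).deg d) : f₀ inc v ∈ GA.deg d := by
  refine inc.piSpanLift_mem_projDeg hGA GA.selfGMod (fun j => ?_) hv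
  show _ ∈ GA.deg 1
  rcases j with i | i
  · simpa [rho_s_u hρ] using hGA.e_mem_deg (s_le (u i))
  · simpa [rho_u_t hρ] using hGA.e_mem_deg (le_t (u i))

lemma σ_mem_projDeg (hρ : LengthFn ρ) (i : Fin (m + 1)) : σ inc i ∈ inc.projDeg ρ x₁ 1 2 :=
  Submodule.subset_span ⟨_, show ρ s (u i) + 1 = 2 by rw [rho_s_u hρ], rfl⟩

lemma f₁_mem_deg (hGA : IncGrading inc ρ GA) (hρ : LengthFn ρ) (d : ℕ)
    (v : inc.ProjSum x₂) (hv : v ∈ (inc.projGMod hGA hρ x₂ 2).deg d) :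
    f₁ inc v ∈ (inc.projGMod hGA hρ x₁ 1).deg d :=
  inc.piSpanLift_mem_projDeg hGA _ (fun _ => sub_mem (σ_mem_projDeg hρ _) (σ_mem_projDeg hρ _)) hv

end Resolution

end VD

/-- For every `n ≥ 1`, the incidence ring of the nested vertical
diamonds poset `{s, u_1, …, u_n, t}` (with `s < u_i < t` for all `i = 1, …, n` and
the `u_i` pairwise incomparable) is a Koszul `R`-ring. -/
theorem vertical_diamonds_koszul
    (k : Type) [Field k] (n : ℕ) (hn : 1 ≤ n)
    (ρ : VD n → VD n → ℕ) (hρ : LengthFn ρ)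
    (A : Type) [Ring A] [Algebra k A] (inc : IncAlg k (VD n) A)
    (GA : GRing (VD n → k) A) (hGA : IncGrading inc ρ GA) :
    GA.IsKoszul := by
  obtain ⟨m, rfl⟩ : ∃ m, n = m + 1 := ⟨n - 1, by omega⟩
  have := inc.projective_projSum (VD.x₁ (m := m))
  have := inc.projective_projSum (VD.x₂ (m := m))
  exact GA.isKoszul_of_length_two (inc.projGMod hGA hρ VD.x₁ 1) (inc.projGMod hGA hρ VD.x₂ 2)
    (VD.f₀ inc) (VD.f₁ inc) (VD.f₀_mem_deg hGA hρ) (VD.f₁_mem_deg hGA hρ) (VD.exact_f₀_aug hGA)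
    (VD.exact_f₁_f₀ inc) (VD.f₁_injective inc) (inc.mem_closure_smul_projDeg hρ _ 1)
    (inc.mem_closure_smul_projDeg hρ _ 2)

end P1605
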